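/- arXiv:2504.11849 — 3 statements merged into one kernel-verified Lean document; each statement's English description precedes it below -/
import Mathlib

section
/- Let K be a compact Hausdorff space and X a real Banach space. For f, g ∈ C(K, X) with f ≠ 0, f ⊥_B g if and only if there exist k₁, k₂ ∈ M_f such that g(k₁) ∈ f(k₁)⁺ and g(k₂) ∈ f(k₂)⁻. -/
/-!
Birkhoff–James orthogonality `f ⊥_B g` splits into `g ∈ f⁺` and `-g ∈ f⁺`, so it suffices to
localise `g ∈ f⁺` to a point of `M_f`. For `t > 0` the sets `{k | ‖f‖ ≤ ‖f k + t • g k‖}` are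
closed and nonempty (the norm of `f + t • g` is attained), and they shrink as `t ↓ 0` because
`t ↦ ‖x + t • y‖` is convex. By compactness some `k` lies in all of them; letting `t → 0` puts
`k` in `M_f`, and then `g k ∈ (f k)⁺`.
-/

open scoped ENNReal

/-- Birkhoff-James orthogonality: `x ⊥_B y` iff `‖x + c • y‖ ≥ ‖x‖` for all scalars `c`. -/
def BJOrth (𝕜 : Type*) {X : Type*} [RCLike 𝕜] [NormedAddCommGroup X] [NormedSpace 𝕜 X]
    (x y : X) : Prop := ∀ c : 𝕜, ‖x‖ ≤ ‖x + c • y‖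

/-- `x` is a left symmetric point. -/
def LeftSymPt (𝕜 : Type*) {X : Type*} [RCLike 𝕜] [NormedAddCommGroup X] [NormedSpace 𝕜 X]
    (x : X) : Prop := ∀ y : X, BJOrth 𝕜 x y → BJOrth 𝕜 y x

/-- `x` is a right symmetric point. -/
def RightSymPt (𝕜 : Type*) {X : Type*} [RCLike 𝕜] [NormedAddCommGroup X] [NormedSpace 𝕜 X]
    (x : X) : Prop := ∀ y : X, BJOrth 𝕜 y x → BJOrth 𝕜 x y

/-- `u ∈ x⁺` : `‖x + t • u‖ ≥ ‖x‖` for all `t ≥ 0`. -/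
def InPlus {X : Type*} [NormedAddCommGroup X] [NormedSpace ℝ X] (x u : X) : Prop :=
  ∀ t : ℝ, 0 ≤ t → ‖x‖ ≤ ‖x + t • u‖

/-- `u ∈ x⁻` : `‖x + t • u‖ ≥ ‖x‖` for all `t ≤ 0`. -/
def InMinus {X : Type*} [NormedAddCommGroup X] [NormedSpace ℝ X] (x u : X) : Prop :=
  ∀ t : ℝ, t ≤ 0 → ‖x‖ ≤ ‖x + t • u‖

section NormedSpace

variable {X : Type*} [NormedAddCommGroup X] [NormedSpace ℝ X]

theorem bjOrth_iff_inPlus_and_inMinus {x y : X} :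
    BJOrth ℝ x y ↔ InPlus x y ∧ InMinus x y :=
  ⟨fun h => ⟨fun t _ => h t, fun t _ => h t⟩,
    fun ⟨hp, hm⟩ t => (le_total 0 t).elim (hp t) (hm t)⟩

theorem inMinus_iff_inPlus_neg {x y : X} : InMinus x y ↔ InPlus x (-y) :=
  ⟨fun h t ht => by simpa using h (-t) (by linarith),
    fun h t ht => by simpa using h (-t) (by linarith)⟩

theorem convexOn_norm_add_smul (x y : X) : ConvexOn ℝ Set.univ fun t : ℝ => ‖x + t • y‖ := by
  have h := convexOn_univ_norm.comp_affineMap (AffineMap.lineMap (k := ℝ) x (x + y))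
  simpa [Function.comp_def, AffineMap.lineMap_apply_module', add_comm] using h

theorem norm_add_smul_le_norm_add_smul {x y : X} {s t : ℝ} (hs : 0 < s) (hst : s ≤ t)
    (h : ‖x‖ ≤ ‖x + s • y‖) : ‖x + s • y‖ ≤ ‖x + t • y‖ :=
  (convexOn_norm_add_smul x y).le_right_of_left_le'' (Set.mem_univ 0) (Set.mem_univ t) hs hst
    (by simpa using h)

theorem le_norm_of_forall_pos_le_norm_add_smul {x y : X} {c : ℝ}
    (h : ∀ t : ℝ, 0 < t → c ≤ ‖x + t • y‖) : c ≤ ‖x‖ := by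
  have hcont : Continuous fun t : ℝ => ‖x + t • y‖ := by fun_prop
  have hlim : Filter.Tendsto (fun t : ℝ => ‖x + t • y‖) (nhdsWithin 0 (Set.Ioi 0)) (nhds ‖x‖) := by
    simpa using (hcont.tendsto 0).mono_left nhdsWithin_le_nhds
  refine ge_of_tendsto hlim ?_
  filter_upwards [self_mem_nhdsWithin] with t ht using h t ht

end NormedSpace

namespace ContinuousMap

variable {K X : Type*} [TopologicalSpace K] [CompactSpace K] [NormedAddCommGroup X]

theorem exists_norm_apply_eq_norm [Nonempty K] (h : C(K, X)) : ∃ k, ‖h k‖ = ‖h‖ := by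
  obtain ⟨k, -, hk⟩ :=
    isCompact_univ.exists_isMaxOn Set.univ_nonempty (map_continuous h).norm.continuousOn
  exact ⟨k, le_antisymm (h.norm_coe_le_norm k)
    ((h.norm_le (norm_nonneg _)).2 fun k' => hk (Set.mem_univ k'))⟩

variable [NormedSpace ℝ X]

theorem inPlus_of_apply {f g : C(K, X)} {k : K} (hk : ‖f k‖ = ‖f‖)
    (h : InPlus (f k) (g k)) : InPlus f g := fun t ht =>
  calc ‖f‖ = ‖f k‖ := hk.symm
    _ ≤ ‖f k + t • g k‖ := h t ht
    _ ≤ ‖f + t • g‖ := (f + t • g).norm_coe_le_norm k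

theorem exists_apply_of_inPlus [Nonempty K] {f g : C(K, X)} (h : InPlus f g) :
    ∃ k, ‖f k‖ = ‖f‖ ∧ InPlus (f k) (g k) := by
  let A : Set.Ioi (0 : ℝ) → Set K := fun t => {k | ‖f‖ ≤ ‖f k + (t : ℝ) • g k‖}
  have hA_closed : ∀ t, IsClosed (A t) := fun t => isClosed_le continuous_const (by fun_prop)
  have hA_nonempty : ∀ t, (A t).Nonempty := fun t => by
    obtain ⟨k, hk⟩ := (f + (t : ℝ) • g).exists_norm_apply_eq_norm
    exact ⟨k, (h t (le_of_lt t.2)).trans (by simpa using hk.ge)⟩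
  have hA_mono : Monotone A := fun s t hst k hk =>
    hk.trans (norm_add_smul_le_norm_add_smul s.2 hst ((f.norm_coe_le_norm k).trans hk))
  have hA_directed : Directed (· ⊇ ·) A := fun s t =>
    ⟨min s t, hA_mono (min_le_left s t), hA_mono (min_le_right s t)⟩
  obtain ⟨k, hk_mem⟩ := IsCompact.nonempty_iInter_of_directed_nonempty_isCompact_isClosed
    A hA_directed hA_nonempty (fun t => (hA_closed t).isCompact) hA_closed
  have hk : ∀ t : ℝ, 0 < t → ‖f‖ ≤ ‖f k + t • g k‖ := fun t ht => Set.mem_iInter.1 hk_mem ⟨t, ht⟩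
  have hnorm : ‖f k‖ = ‖f‖ :=
    le_antisymm (f.norm_coe_le_norm k) (le_norm_of_forall_pos_le_norm_add_smul hk)
  refine ⟨k, hnorm, fun t ht => ?_⟩
  rcases ht.eq_or_lt with rfl | ht
  · simp
  · exact hnorm.trans_le (hk t ht)

theorem inPlus_iff_exists_apply [Nonempty K] {f g : C(K, X)} :
    InPlus f g ↔ ∃ k, ‖f k‖ = ‖f‖ ∧ InPlus (f k) (g k) :=
  ⟨exists_apply_of_inPlus, fun ⟨_, hk, h⟩ => inPlus_of_apply hk h⟩

theorem inMinus_iff_exists_apply [Nonempty K] {f g : C(K, X)} :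
    InMinus f g ↔ ∃ k, ‖f k‖ = ‖f‖ ∧ InMinus (f k) (g k) := by
  simp only [inMinus_iff_inPlus_neg, inPlus_iff_exists_apply, neg_apply]

end ContinuousMap

theorem stmt7_general (K X : Type*) [TopologicalSpace K] [CompactSpace K]
    [NormedAddCommGroup X] [NormedSpace ℝ X]
    (f g : C(K, X)) (hf : f ≠ 0) :
    BJOrth ℝ f g ↔ ∃ k₁ k₂ : K, ‖f k₁‖ = ‖f‖ ∧ ‖f k₂‖ = ‖f‖ ∧
      InPlus (f k₁) (g k₁) ∧ InMinus (f k₂) (g k₂) := by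
  obtain ⟨k, -⟩ := DFunLike.ne_iff.1 hf
  have : Nonempty K := ⟨k⟩
  rw [bjOrth_iff_inPlus_and_inMinus, ContinuousMap.inPlus_iff_exists_apply,
    ContinuousMap.inMinus_iff_exists_apply]
  constructor
  · rintro ⟨⟨k₁, h₁, hp⟩, ⟨k₂, h₂, hm⟩⟩
    exact ⟨k₁, k₂, h₁, h₂, hp, hm⟩
  · rintro ⟨k₁, k₂, h₁, h₂, hp, hm⟩
    exact ⟨⟨k₁, h₁, hp⟩, ⟨k₂, h₂, hm⟩⟩

/-- Characterization of Birkhoff-James orthogonality in C(K, X), K compact Hausdorff,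
X a real Banach space. -/
theorem stmt7 (K X : Type*) [TopologicalSpace K] [CompactSpace K] [T2Space K]
    [NormedAddCommGroup X] [NormedSpace ℝ X] [CompleteSpace X]
    (f g : C(K, X)) (hf : f ≠ 0) :
    BJOrth ℝ f g ↔ ∃ k₁ k₂ : K, ‖f k₁‖ = ‖f‖ ∧ ‖f k₂‖ = ‖f‖ ∧
      InPlus (f k₁) (g k₁) ∧ InMinus (f k₂) (g k₂) :=
  stmt7_general K X f g hf
end

section
/- Let K be a locally compact normal Hausdorff space that is not compact and X a Banach space. Then the only right symmetric point of C_0(K, X) is the zero function. -/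
open scoped ENNReal

/-!
Let `f ≠ 0` attain its norm `M` at `k₀`. Since `K` is not compact, `‖f k₁‖ < M / 2` at some
`k₁`, and Urysohn's lemma modifies `f` inside `{‖f‖ < M / 2}` into a `g` with `‖g‖ = M` and
`g k₁ = w`, where `‖w‖ = M` and `f k₁` is a nonpositive multiple of `w`. Then `g ⊥_B f`: for
`Re c ≥ 0` the point `k₀` (where `g = f`) witnesses `‖g + c f‖ ≥ M`, for `Re c ≤ 0` the point
`k₁` does. But `‖f - g / 4‖ ≤ 3M / 4`, so `f` is not Birkhoff-James orthogonal to `g`.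
-/

open Set RCLike
open scoped ZeroAtInfty

section NormedSpace

variable {𝕜 X : Type*} [RCLike 𝕜] [NormedAddCommGroup X] [NormedSpace 𝕜 X]

theorem norm_le_norm_add_smul_ofReal_smul (x : X) {a : 𝕜} {s : ℝ} (h : 0 ≤ s * re a) :
    ‖x‖ ≤ ‖x + a • (s : 𝕜) • x‖ := by
  have h1 : 1 ≤ ‖1 + a * s‖ := by
    calc (1 : ℝ) ≤ re (1 + a * s) := by simp only [map_add, one_re, re_mul_ofReal]; linarith
      _ ≤ ‖1 + a * s‖ := re_le_norm _
  calc ‖x‖ = 1 * ‖x‖ := (one_mul _).symm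
    _ ≤ ‖1 + a * s‖ * ‖x‖ := by gcongr
    _ = ‖x + a • (s : 𝕜) • x‖ := by rw [← norm_smul, add_smul, one_smul, mul_smul]

variable (𝕜) in
theorem exists_norm_eq_and_eq_nonpos_smul [Nontrivial X] (v : X) {r : ℝ} (hr : 0 < r) :
    ∃ w : X, ‖w‖ = r ∧ ∃ s : ℝ, s ≤ 0 ∧ v = (s : 𝕜) • w := by
  obtain ⟨e, he, t, ht, hv⟩ : ∃ e : X, e ≠ 0 ∧ ∃ t : ℝ, 0 ≤ t ∧ v = (t : 𝕜) • e := by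
    by_cases hv : v = 0
    · obtain ⟨e, he⟩ := exists_ne (0 : X)
      exact ⟨e, he, 0, le_rfl, by simp [hv]⟩
    · exact ⟨v, hv, 1, zero_le_one, by simp⟩
  have he' : ‖e‖ ≠ 0 := norm_ne_zero_iff.2 he
  refine ⟨-((r / ‖e‖ : ℝ) : 𝕜) • e, ?_, -(t * ‖e‖ / r), ?_, ?_⟩
  · rw [norm_smul, norm_neg, norm_ofReal, abs_of_pos (by positivity), div_mul_cancel₀ _ he']
  · have := norm_nonneg e
    exact neg_nonpos.2 (by positivity)
  · rw [hv, smul_smul, ← ofReal_neg, ← ofReal_mul]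
    congr 2
    field_simp

theorem bjOrth_zero_left (y : X) : BJOrth 𝕜 (0 : X) y := fun _ => by simp

end NormedSpace

namespace ZeroAtInftyContinuousMap

variable {K X : Type*} [TopologicalSpace K]

section Norm

variable [NormedAddCommGroup X]

theorem norm_apply_le (f : C₀(K, X)) (k : K) : ‖f k‖ ≤ ‖f‖ :=
  f.toBCF.norm_coe_le_norm k

theorem norm_le (f : C₀(K, X)) {C : ℝ} (hC : 0 ≤ C) : ‖f‖ ≤ C ↔ ∀ k, ‖f k‖ ≤ C :=
  BoundedContinuousFunction.norm_le hC

theorem tendsto_norm_cocompact (f : C₀(K, X)) :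
    Filter.Tendsto (fun k => ‖f k‖) (Filter.cocompact K) (nhds 0) := by
  simpa using f.zero_at_infty'.norm

theorem exists_norm_apply_eq_norm {f : C₀(K, X)} (hf : f ≠ 0) : ∃ k, ‖f k‖ = ‖f‖ := by
  obtain ⟨k₁, hk₁⟩ : ∃ k, f k ≠ 0 := by
    by_contra! h
    exact hf (ext h)
  obtain ⟨k, hk⟩ := (map_continuous f).norm.exists_forall_ge' k₁
    (f.tendsto_norm_cocompact.eventually (ge_mem_nhds (norm_pos_iff.2 hk₁)))
  exact ⟨k, le_antisymm (f.norm_apply_le k) ((f.norm_le (norm_nonneg _)).2 hk)⟩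

theorem exists_norm_apply_lt [NoncompactSpace K] (f : C₀(K, X)) {ε : ℝ} (hε : 0 < ε) :
    ∃ k, ‖f k‖ < ε := by
  have : (Filter.cocompact K).NeBot := Filter.cocompact_neBot_iff.2 ‹_›
  exact (f.tendsto_norm_cocompact.eventually (gt_mem_nhds hε)).exists

end Norm

theorem exists_apply_eq_eqOn_compl_norm_le [R1Space K] [LocallyCompactSpace K]
    [NormedAddCommGroup X] [NormedSpace ℝ X] (f : C₀(K, X)) {U : Set K} (hU : IsOpen U)
    {x : K} (hx : x ∈ U) (w : X) :
    ∃ g : C₀(K, X), g x = w ∧ EqOn g f Uᶜ ∧ ∀ k, ‖g k‖ ≤ max ‖f k‖ ‖w‖ := by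
  obtain ⟨φ, hφx, hφc, hφU, hφ01⟩ :=
    exists_continuousMap_one_of_isCompact_subset_isOpen isCompact_singleton hU
      (singleton_subset_iff.2 hx)
  let h : C₀(K, X) :=
    ⟨⟨fun k => φ k • (w - f k), by fun_prop⟩, (HasCompactSupport.smul_right hφc).is_zero_at_infty⟩
  have h_apply (k : K) : h k = φ k • (w - f k) := rfl
  refine ⟨f + h, ?_, fun k hk => ?_, fun k => ?_⟩
  · simp [h_apply, hφx rfl]
  · simp [h_apply, image_eq_zero_of_notMem_tsupport fun h => hk (hφU h)]
  · have := (convex_closedBall (0 : X) (max ‖f k‖ ‖w‖)).add_smul_sub_mem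
      (mem_closedBall_zero_iff.2 (le_max_left _ _))
      (mem_closedBall_zero_iff.2 (le_max_right _ _)) (hφ01 k)
    simpa [h_apply] using this

variable {𝕜 : Type*} [RCLike 𝕜] [NormedAddCommGroup X] [NormedSpace 𝕜 X]

theorem bjOrth_of_norm_apply_eq_norm {f g : C₀(K, X)} {k₀ k₁ : K} {s₀ s₁ : ℝ}
    (h₀ : ‖g k₀‖ = ‖g‖) (hs₀ : 0 ≤ s₀) (hf₀ : f k₀ = (s₀ : 𝕜) • g k₀)
    (h₁ : ‖g k₁‖ = ‖g‖) (hs₁ : s₁ ≤ 0) (hf₁ : f k₁ = (s₁ : 𝕜) • g k₁) : BJOrth 𝕜 g f := by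
  intro c
  have key (k : K) (s : ℝ) (hs : 0 ≤ s * re c) (hf : f k = (s : 𝕜) • g k)
      (hk : ‖g k‖ = ‖g‖) : ‖g‖ ≤ ‖g + c • f‖ :=
    calc ‖g‖ = ‖g k‖ := hk.symm
      _ ≤ ‖g k + c • (s : 𝕜) • g k‖ := norm_le_norm_add_smul_ofReal_smul _ hs
      _ = ‖(g + c • f) k‖ := by rw [add_apply, smul_apply, hf]
      _ ≤ ‖g + c • f‖ := norm_apply_le _ _
  rcases le_total 0 (re c) with hc | hc
  · exact key k₀ s₀ (mul_nonneg hs₀ hc) hf₀ h₀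
  · exact key k₁ s₁ (mul_nonneg_of_nonpos_of_nonpos hs₁ hc) hf₁ h₁

theorem norm_add_neg_quarter_smul_le {f g : C₀(K, X)} (hg : ∀ k, ‖g k‖ ≤ ‖f‖)
    (hgf : EqOn g f {k | ‖f k‖ < ‖f‖ / 2}ᶜ) : ‖f + ((-1 / 4 : ℝ) : 𝕜) • g‖ ≤ 3 / 4 * ‖f‖ := by
  refine (norm_le _ (by positivity)).2 fun k => ?_
  by_cases hk : ‖f k‖ < ‖f‖ / 2
  · calc ‖f k + ((-1 / 4 : ℝ) : 𝕜) • g k‖ ≤ ‖f k‖ + 1 / 4 * ‖g k‖ := by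
          refine (norm_add_le _ _).trans_eq ?_
          rw [norm_smul, norm_ofReal]
          norm_num
      _ ≤ 3 / 4 * ‖f‖ := by linarith [hg k]
  · calc ‖f k + ((-1 / 4 : ℝ) : 𝕜) • g k‖ = ‖((1 + -1 / 4 : ℝ) : 𝕜) • f k‖ := by
          rw [hgf hk, ofReal_add, ofReal_one, add_smul, one_smul]
      _ ≤ 3 / 4 * ‖f‖ := by
          rw [norm_smul, norm_ofReal]
          norm_num
          exact f.norm_apply_le k

theorem exists_bjOrth_and_not_bjOrth [R1Space K] [LocallyCompactSpace K] [NoncompactSpace K]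
    {f : C₀(K, X)} (hf : f ≠ 0) : ∃ g : C₀(K, X), BJOrth 𝕜 g f ∧ ¬ BJOrth 𝕜 f g := by
  set M := ‖f‖
  have hM : 0 < M := norm_pos_iff.2 hf
  obtain ⟨k₀, hk₀⟩ := f.exists_norm_apply_eq_norm hf
  obtain ⟨k₁, hk₁⟩ := f.exists_norm_apply_lt (half_pos hM)
  have : Nontrivial X := nontrivial_of_ne (f k₀) 0 (norm_pos_iff.1 (hk₀ ▸ hM))
  obtain ⟨w, hw, s, hs, hfw⟩ := exists_norm_eq_and_eq_nonpos_smul 𝕜 (f k₁) hM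
  let _ := NormedSpace.restrictScalars ℝ 𝕜 X
  obtain ⟨g, hgk₁, hgf, hg_le_max⟩ := f.exists_apply_eq_eqOn_compl_norm_le
    (isOpen_lt (map_continuous f).norm continuous_const) hk₁ w
  have hg_le_norm (k : K) : ‖g k‖ ≤ M := (hg_le_max k).trans (max_le (f.norm_apply_le k) hw.le)
  have hg : ‖g‖ = M :=
    le_antisymm ((g.norm_le hM.le).2 hg_le_norm) (hw ▸ hgk₁ ▸ g.norm_apply_le k₁)
  have hgk₀ : g k₀ = f k₀ := hgf fun h => by linarith [show ‖f k₀‖ < M / 2 from h]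
  refine ⟨g, bjOrth_of_norm_apply_eq_norm (s₀ := 1) (by rw [hgk₀, hk₀, hg]) zero_le_one
    (by rw [hgk₀, ofReal_one, one_smul]) (by rw [hgk₁, hw, hg]) hs (by rw [hgk₁, hfw]),
    fun hfg => ?_⟩
  linarith [hfg ((-1 / 4 : ℝ) : 𝕜), norm_add_neg_quarter_smul_le (𝕜 := 𝕜) hg_le_norm hgf]

end ZeroAtInftyContinuousMap

theorem stmt12_general (𝕜 K X : Type*) [RCLike 𝕜] [TopologicalSpace K] [T2Space K]
    [LocallyCompactSpace K] (hK : ¬ CompactSpace K)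
    [NormedAddCommGroup X] [NormedSpace 𝕜 X]
    (f : ZeroAtInftyContinuousMap K X) :
    RightSymPt 𝕜 f ↔ f = 0 := by
  have : NoncompactSpace K := not_compactSpace_iff.1 hK
  refine ⟨fun hf => ?_, fun hf y _ => hf ▸ bjOrth_zero_left y⟩
  by_contra hf0
  obtain ⟨g, hgf, hfg⟩ := ZeroAtInftyContinuousMap.exists_bjOrth_and_not_bjOrth (𝕜 := 𝕜) hf0
  exact hfg (hf g hgf)

/-- If K is locally compact, normal, Hausdorff and not compact, then the only right symmetric
point of C₀(K, X) is zero. -/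
theorem stmt12 (𝕜 K X : Type*) [RCLike 𝕜] [TopologicalSpace K] [T2Space K]
    [LocallyCompactSpace K] [NormalSpace K] (hK : ¬ CompactSpace K)
    [NormedAddCommGroup X] [NormedSpace 𝕜 X] [CompleteSpace X]
    (f : ZeroAtInftyContinuousMap K X) :
    RightSymPt 𝕜 f ↔ f = 0 :=
  stmt12_general 𝕜 K X hK f
end

section
/- Let X, Y be reflexive Banach spaces and T : X → Y a rank-one bounded linear operator of norm one that is a right symmetric point of L(X, Y). Then there exist a right symmetric point w of Y and a right symmetric point f of X* such that Tx = f(x)·w for all x ∈ X. -/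
open scoped ENNReal

/-!
A rank-one operator is `x ↦ f x • w` with `f ≠ 0` and `w ≠ 0`. Since
`‖f.smulRight y‖ = ‖f‖ * ‖y‖` and `smulRight` is bilinear, Birkhoff-James orthogonality
between two operators `f.smulRight y`, `f.smulRight w` with the same functional is
orthogonality of `y` and `w`, and likewise with the same vector. Testing right symmetry of
`T = f.smulRight w` against such operators therefore gives right symmetry of `w` and of `f`.
-/

namespace ContinuousLinearMap

variable {𝕜 X Y : Type*} [RCLike 𝕜] [NormedAddCommGroup X] [NormedSpace 𝕜 X]
  [NormedAddCommGroup Y] [NormedSpace 𝕜 Y]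

theorem exists_eq_smulRight_of_finrank_range_eq_one (T : X →L[𝕜] Y)
    (hT : Module.finrank 𝕜 (LinearMap.range T.toLinearMap) = 1) :
    ∃ (f : X →L[𝕜] 𝕜) (w : Y), f ≠ 0 ∧ w ≠ 0 ∧ T = f.smulRight w := by
  obtain ⟨⟨w, x, rfl⟩, hw, hspan⟩ := finrank_eq_one_iff'.mp hT
  replace hw : T x ≠ 0 := fun h ↦ hw (Subtype.ext h)
  obtain ⟨ψ, hψ⟩ := SeparatingDual.exists_eq_one (R := 𝕜) hw
  have hT_eq : T = (ψ.comp T).smulRight (T x) := by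
    ext y
    obtain ⟨c, hc⟩ := hspan ⟨T y, y, rfl⟩
    have hc : c • T x = T y := congrArg Subtype.val hc
    simp [← hc, hψ]
  refine ⟨ψ.comp T, T x, fun hf ↦ ?_, hw, hT_eq⟩
  simpa [hψ] using congrArg (· x) hf

theorem bjOrth_smulRight_iff_right {f : X →L[𝕜] 𝕜} (hf : f ≠ 0) (y w : Y) :
    BJOrth 𝕜 (f.smulRight y) (f.smulRight w) ↔ BJOrth 𝕜 y w := by
  have hf : 0 < ‖f‖ := norm_pos_iff.mpr hf
  have h_add (c : 𝕜) : f.smulRight y + c • f.smulRight w = f.smulRight (y + c • w) := by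
    ext x
    simp only [add_apply, smulRight_apply, smul_apply, smul_add, smul_comm c (f x) w]
  refine forall_congr' fun c ↦ ?_
  rw [h_add, norm_smulRight_apply, norm_smulRight_apply]
  exact mul_le_mul_iff_right₀ hf

theorem bjOrth_smulRight_iff_left {w : Y} (hw : w ≠ 0) (g f : X →L[𝕜] 𝕜) :
    BJOrth 𝕜 (g.smulRight w) (f.smulRight w) ↔ BJOrth 𝕜 g f := by
  have hw : 0 < ‖w‖ := norm_pos_iff.mpr hw
  have h_add (c : 𝕜) : g.smulRight w + c • f.smulRight w = (g + c • f).smulRight w := by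
    ext x
    simp [add_smul, smul_smul]
  refine forall_congr' fun c ↦ ?_
  rw [h_add, norm_smulRight_apply, norm_smulRight_apply]
  exact mul_le_mul_iff_left₀ hw

theorem RightSymPt.of_smulRight_right {f : X →L[𝕜] 𝕜} {w : Y} (hf : f ≠ 0)
    (h : RightSymPt 𝕜 (f.smulRight w)) : RightSymPt 𝕜 w := fun y hy ↦
  (bjOrth_smulRight_iff_right hf w y).mp <| h _ <| (bjOrth_smulRight_iff_right hf y w).mpr hy

theorem RightSymPt.of_smulRight_left {f : X →L[𝕜] 𝕜} {w : Y} (hw : w ≠ 0)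
    (h : RightSymPt 𝕜 (f.smulRight w)) : RightSymPt 𝕜 f := fun g hg ↦
  (bjOrth_smulRight_iff_left hw f g).mp <| h _ <| (bjOrth_smulRight_iff_left hw g f).mpr hg

end ContinuousLinearMap

open ContinuousLinearMap in
theorem stmt18_general (𝕜 X Y : Type*) [RCLike 𝕜]
    [NormedAddCommGroup X] [NormedSpace 𝕜 X]
    [NormedAddCommGroup Y] [NormedSpace 𝕜 Y]
    (T : X →L[𝕜] Y) (hrank : Module.finrank 𝕜 (LinearMap.range T.toLinearMap) = 1)
    (hsym : RightSymPt 𝕜 T) :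
    ∃ (w : Y) (f : X →L[𝕜] 𝕜), RightSymPt 𝕜 w ∧ RightSymPt 𝕜 f ∧ ∀ x : X, T x = f x • w := by
  obtain ⟨f, w, hf, hw, rfl⟩ := exists_eq_smulRight_of_finrank_range_eq_one T hrank
  exact ⟨w, f, .of_smulRight_right hf hsym, .of_smulRight_left hw hsym, fun _ ↦ rfl⟩

/-- A rank-one norm-one right symmetric operator between reflexive Banach spaces is of the form
x ↦ f(x) w with w, f right symmetric. -/
theorem stmt18 (𝕜 X Y : Type*) [RCLike 𝕜]
    [NormedAddCommGroup X] [NormedSpace 𝕜 X] [CompleteSpace X]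
    [NormedAddCommGroup Y] [NormedSpace 𝕜 Y] [CompleteSpace Y]
    (hX : Function.Surjective (NormedSpace.inclusionInDoubleDual 𝕜 X))
    (hY : Function.Surjective (NormedSpace.inclusionInDoubleDual 𝕜 Y))
    (T : X →L[𝕜] Y) (hrank : Module.finrank 𝕜 (LinearMap.range T.toLinearMap) = 1)
    (hT : ‖T‖ = 1) (hsym : RightSymPt 𝕜 T) :
    ∃ (w : Y) (f : X →L[𝕜] 𝕜), RightSymPt 𝕜 w ∧ RightSymPt 𝕜 f ∧ ∀ x : X, T x = f x • w :=
  stmt18_general 𝕜 X Y T hrank hsym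
end
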